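/- Elements of attainable measurements on qubit models have rank at most 1: Let ρ be a density matrix on ℂ² and λ a 2×2 Hermitian complex matrix with tr(ρλ) = 0 and ρλ + λρ ≠ 0 (i.e. the model genuinely depends on the parameter, since dρ/dθ = (1/2)(ρλ + λρ)). Let M be a positive semidefinite 2×2 complex matrix and ξ ∈ ℝ with M^{1/2} λ ρ^{1/2} = ξ M^{1/2} ρ^{1/2} (the condition for equality in the Braunstein–Caves inequality). Then M is not invertible; equivalently, M has rank at most 1. -/

import Mathlib

/-! If `M` were invertible, so would be `M^{1/2}`, and cancelling it from the equality
condition makes `ρ` an eigen-operator of `λ` on both sides: `λρ = ξρ = ρλ` (the second by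
taking adjoints, as `ξ` is real). Then `tr(ρλ) = ξ tr ρ = ξ` forces `ξ = 0`, so `ρλ + λρ = 0`. -/

open scoped BigOperators ComplexOrder

noncomputable section

def Matrix.PosSemidef.sqrt {n : Type*} [Fintype n] [DecidableEq n] {𝕜 : Type*} [RCLike 𝕜]
    {A : Matrix n n 𝕜} (hA : A.PosSemidef) : Matrix n n 𝕜 :=
  hA.1.eigenvectorUnitary.1 * Matrix.diagonal ((↑) ∘ (√·) ∘ hA.1.eigenvalues) *
  (star hA.1.eigenvectorUnitary : Matrix n n 𝕜)

namespace Matrix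

theorem IsHermitian.mul_comm_of_mul_eq_smul {n α : Type*} [Fintype n] [CommSemiring α]
    [StarRing α] {A B : Matrix n n α} (hA : A.IsHermitian) (hB : B.IsHermitian) {c : α}
    (hc : IsSelfAdjoint c) (h : A * B = c • B) : B * A = c • B := by
  simpa only [conjTranspose_mul, conjTranspose_smul, hA.eq, hB.eq, hc.star_eq] using
    congrArg (fun X : Matrix n n α => Xᴴ) h

variable {n : Type*} [Fintype n] [DecidableEq n] {𝕜 : Type*} [RCLike 𝕜]

theorem PosSemidef.sqrt_mul_self {A : Matrix n n 𝕜} (hA : A.PosSemidef) :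
    hA.sqrt * hA.sqrt = A := by
  have hU : (star hA.1.eigenvectorUnitary : Matrix n n 𝕜) * hA.1.eigenvectorUnitary.1 = 1 :=
    Unitary.star_mul_self_of_mem hA.1.eigenvectorUnitary.2
  have hdiag : diagonal ((↑) ∘ (√·) ∘ hA.1.eigenvalues) *
      diagonal ((↑) ∘ (√·) ∘ hA.1.eigenvalues) = diagonal ((↑) ∘ hA.1.eigenvalues : n → 𝕜) := by
    rw [diagonal_mul_diagonal]
    congr 1
    funext i
    simp only [Function.comp_apply, ← RCLike.ofReal_mul,
      Real.mul_self_sqrt (hA.eigenvalues_nonneg i)]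
  conv_rhs => rw [hA.1.spectral_theorem, Unitary.conjStarAlgAut_apply]
  simp only [PosSemidef.sqrt, mul_assoc]
  rw [← mul_assoc _ _ (diagonal _ * _), hU, one_mul, ← mul_assoc (diagonal _), hdiag]

theorem PosSemidef.isUnit_sqrt {A : Matrix n n 𝕜} (hA : A.PosSemidef) (h : IsUnit A) :
    IsUnit hA.sqrt :=
  isUnit_mul_self_iff.mp (by rwa [hA.sqrt_mul_self])

theorem PosSemidef.mul_eq_smul_of_mul_sqrt_eq_smul {ρ : Matrix n n 𝕜} (hρ : ρ.PosSemidef)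
    {L : Matrix n n 𝕜} {c : 𝕜} (h : L * hρ.sqrt = c • hρ.sqrt) : L * ρ = c • ρ := by
  rw [← hρ.sqrt_mul_self, ← mul_assoc, h, smul_mul_assoc]

end Matrix

/-- **Elements of attainable measurements on qubit models have rank at most 1.**
If the qubit model genuinely depends on the parameter (`ρλ + λρ ≠ 0`) and the POVM
element `M` satisfies the Braunstein–Caves equality condition, then `M` is singular. -/
theorem attainable_povm_rank_one
    (ρ : Matrix (Fin 2) (Fin 2) ℂ) (hρ : ρ.PosSemidef) (hρtr : ρ.trace = 1)
    (lam : Matrix (Fin 2) (Fin 2) ℂ) (hlam : lam.IsHermitian)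
    (htr0 : (ρ * lam).trace = 0) (hdep : ρ * lam + lam * ρ ≠ 0)
    (M : Matrix (Fin 2) (Fin 2) ℂ) (hM : M.PosSemidef) (ξ : ℝ)
    (heq : hM.sqrt * lam * hρ.sqrt = (ξ : ℂ) • (hM.sqrt * hρ.sqrt)) :
    ¬ IsUnit M := by
  intro hU
  have hsqrt : lam * hρ.sqrt = (ξ : ℂ) • hρ.sqrt := by
    rw [mul_assoc, ← mul_smul_comm] at heq
    exact (hM.isUnit_sqrt hU).mul_left_cancel heq
  have hright : lam * ρ = (ξ : ℂ) • ρ := hρ.mul_eq_smul_of_mul_sqrt_eq_smul hsqrt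
  have hleft : ρ * lam = (ξ : ℂ) • ρ :=
    hlam.mul_comm_of_mul_eq_smul hρ.1 (Complex.conj_ofReal ξ) hright
  have hξ : (ξ : ℂ) = 0 := by
    rwa [hleft, Matrix.trace_smul, hρtr, smul_eq_mul, mul_one] at htr0
  exact hdep (by rw [hleft, hright, hξ, zero_smul, add_zero])
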